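/- arXiv:2201.03820 — 3 statements merged into one kernel-verified Lean document; each statement's English description precedes it below -/
import Mathlib

section
/- In the graph H constructed from a bipartite graph G = (R ∪ B, E) by adding, for each blue vertex u_i ∈ B, a set C_i of b²+3 pendant-like vertices adjacent only to u_i (where b = |B| and b ≥ 2), adding a set D of b²+3 vertices adjacent only to a new vertex ⋆, making ⋆ adjacent to all red vertices, and adding a new vertex † adjacent only to ⋆: the minimum vertex cover number of H is exactly b + 1. -/
/-- `S` is a vertex cover of `G`: every edge has at least one endpoint in `S`. -/
def IsVertexCover {V : Type*} (G : SimpleGraph V) (S : Set V) : Prop :=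
  ∀ ⦃u v : V⦄, G.Adj u v → u ∈ S ∨ v ∈ S

/-- The minimum vertex cover number of `G`. -/
noncomputable def mvc {V : Type*} (G : SimpleGraph V) : ℕ :=
  sInf {n | ∃ S : Set V, S.Finite ∧ IsVertexCover G S ∧ S.ncard = n}

/-- The vertices of the graph `H` of the reduction: red vertices (from `R`),
blue vertices (from `B`), for each blue vertex `n` dependent vertices,
`n` dependent vertices of type `⋆`, the universal vertex `⋆` and the
backup vertex `†`. -/
inductive RVtx (R B : Type) (n : ℕ) : Type
  | red : R → RVtx R B n
  | blue : B → RVtx R B n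
  | dep : B → Fin n → RVtx R B n
  | depStar : Fin n → RVtx R B n
  | star : RVtx R B n
  | dagger : RVtx R B n

/-- The base adjacency relation of the graph `H` of the reduction, where
`E r u` means that red vertex `r` and blue vertex `u` are adjacent in `G`. -/
def hRel (R B : Type) (n : ℕ) (E : R → B → Prop) :
    RVtx R B n → RVtx R B n → Prop
  | .red r, .blue u => E r u
  | .blue u, .dep u' _ => u = u'
  | .star, .depStar _ => True
  | .red _, .star => True
  | .star, .dagger => True
  | _, _ => False

/-- The graph `H` of the reduction, built from the bipartite graph `G` with red
vertices `R`, blue vertices `B` and edge relation `E`, with `b² + 3` dependent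
vertices per blue vertex and of type `⋆`. -/
def hGraph (R B : Type) (b : ℕ) (E : R → B → Prop) : SimpleGraph (RVtx R B (b ^ 2 + 3)) :=
  SimpleGraph.fromRel (hRel R B (b ^ 2 + 3) E)

/-!
The cover `{⋆} ∪ B` has `b + 1` vertices. Conversely, a cover missing `⋆` or some blue vertex `u`
must contain all `b² + 3` pendant vertices of `D` or of `C_u`, so every cover has at least
`min (b + 1) (b² + 3) = b + 1` vertices.
-/

namespace IsVertexCover

variable {V : Type*} {G : SimpleGraph V} {S : Set V}

theorem card_le_ncard_of_notMem (hS : S.Finite) (hc : IsVertexCover G S) {v : V} (hv : v ∉ S)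
    {ι : Type*} [Finite ι] {f : ι → V} (hf : Function.Injective f)
    (hadj : ∀ i, G.Adj v (f i)) : Nat.card ι ≤ S.ncard := by
  have hsub : Set.range f ⊆ S := by
    rintro _ ⟨i, rfl⟩
    exact (hc (hadj i)).resolve_left hv
  exact Set.ncard_range_of_injective hf ▸ Set.ncard_le_ncard hsub hS

end IsVertexCover

theorem mvc_le_ncard {V : Type*} {G : SimpleGraph V} {S : Set V} (hS : S.Finite)
    (hc : IsVertexCover G S) : mvc G ≤ S.ncard :=
  Nat.sInf_le ⟨S, hS, hc, rfl⟩

theorem le_mvc {V : Type*} {G : SimpleGraph V} {n : ℕ}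
    (hne : ∃ S : Set V, S.Finite ∧ IsVertexCover G S)
    (h : ∀ S : Set V, S.Finite → IsVertexCover G S → n ≤ S.ncard) : n ≤ mvc G := by
  obtain ⟨S, hS, hc⟩ := hne
  exact le_csInf ⟨_, S, hS, hc, rfl⟩ fun _ ⟨T, hT, hcT, hn⟩ => hn ▸ h T hT hcT

namespace hGraph

variable {R B : Type} {b : ℕ} {E : R → B → Prop}

theorem adj_blue_dep (u : B) (i : Fin (b ^ 2 + 3)) :
    (hGraph R B b E).Adj (.blue u) (.dep u i) := by
  simp [hGraph, hRel]

theorem adj_star_depStar (i : Fin (b ^ 2 + 3)) : (hGraph R B b E).Adj .star (.depStar i) := by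
  simp [hGraph, hRel]

theorem isVertexCover_insert_star_range_blue :
    IsVertexCover (hGraph R B b E) (insert .star (Set.range .blue)) := by
  intro x y hxy
  obtain ⟨-, h⟩ := SimpleGraph.fromRel_adj _ _ _ |>.mp hxy
  cases x <;> cases y <;> simp [hRel] at h <;> simp

theorem ncard_insert_star_range_blue [Finite B] :
    (insert .star (Set.range .blue) : Set (RVtx R B (b ^ 2 + 3))).ncard = Nat.card B + 1 := by
  rw [Set.ncard_insert_of_notMem (by simp), Set.ncard_range_of_injective fun _ _ => RVtx.blue.inj]

theorem min_le_ncard_of_isVertexCover [Finite B] {S : Set (RVtx R B (b ^ 2 + 3))}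
    (hS : S.Finite) (hc : IsVertexCover (hGraph R B b E) S) :
    min (Nat.card B + 1) (b ^ 2 + 3) ≤ S.ncard := by
  by_cases hstar : .star ∈ S
  · by_cases hblue : ∀ u : B, .blue u ∈ S
    · have hsub : insert .star (Set.range .blue) ⊆ S := by
        rintro _ (rfl | ⟨u, rfl⟩)
        exacts [hstar, hblue u]
      exact min_le_of_left_le <| ncard_insert_star_range_blue (R := R) (B := B) (b := b) ▸
        Set.ncard_le_ncard hsub hS
    · obtain ⟨u, hu⟩ := not_forall.mp hblue
      exact min_le_of_right_le <| (Nat.card_fin _).ge.trans <|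
        hc.card_le_ncard_of_notMem hS hu (fun _ _ h => (RVtx.dep.inj h).2) (adj_blue_dep u)
  · exact min_le_of_right_le <| (Nat.card_fin _).ge.trans <|
      hc.card_le_ncard_of_notMem hS hstar (fun _ _ => RVtx.depStar.inj) adj_star_depStar

end hGraph

theorem mvc_hGraph_general (R B : Type) [Fintype B] (E : R → B → Prop)
    (b : ℕ) (hb : Fintype.card B = b) :
    mvc (hGraph R B b E) = b + 1 := by
  rw [← Nat.card_eq_fintype_card] at hb
  have hcover := hGraph.isVertexCover_insert_star_range_blue (R := R) (b := b) (E := E)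
  apply le_antisymm
  · calc mvc (hGraph R B b E) ≤ _ := mvc_le_ncard (Set.toFinite _) hcover
      _ = b + 1 := by rw [hGraph.ncard_insert_star_range_blue, hb]
  · refine le_mvc ⟨_, Set.toFinite _, hcover⟩ fun S hS hc => ?_
    have hmin := hGraph.min_le_ncard_of_isVertexCover hS hc
    have : b ≤ b ^ 2 := Nat.le_self_pow two_ne_zero b
    rw [hb] at hmin
    omega

/-- In the graph `H` constructed from a connected bipartite graph
`G = (R ∪ B, E)` with `b = |B| ≥ 2` and every blue vertex having a red neighbor,
the minimum vertex cover number of `H` is exactly `b + 1`. -/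
theorem mvc_hGraph (R B : Type) [Fintype R] [Fintype B] (E : R → B → Prop)
    (b : ℕ) (hb : Fintype.card B = b) (hb2 : 2 ≤ b)
    (hredneighbor : ∀ u : B, ∃ r : R, E r u)
    (hconn : (SimpleGraph.fromRel (fun x y : R ⊕ B =>
        ∃ r u, x = Sum.inl r ∧ y = Sum.inr u ∧ E r u)).Connected) :
    mvc (hGraph R B b E) = b + 1 :=
  mvc_hGraph_general R B E b hb
end

section
/- In the graph H of the reduction (as constructed from a bipartite graph G with blue vertices B of size b ≥ 2), any vertex cover of H of size at most b + k + 2, where k < b, must contain all b blue vertices and the universal vertex ⋆. -/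
/-!
A vertex outside a vertex cover forces all of its neighbours into the cover. Each blue vertex
and `⋆` has `b² + 3` pendant neighbours, more than the `b + k + 2 ≤ 2b + 1` vertices the cover
may contain, so none of them can be left out.
-/

theorem IsVertexCover.mem_of_ncard_lt {V ι : Type*} {G : SimpleGraph V} {S : Set V}
    (hS : IsVertexCover G S) (hSfin : S.Finite) {v : V} {f : ι → V}
    (hf : Function.Injective f) (hadj : ∀ i, G.Adj v (f i)) (hlt : S.ncard < Nat.card ι) :
    v ∈ S := by
  by_contra hv
  have hsub : Set.range f ⊆ S := by
    rintro _ ⟨i, rfl⟩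
    exact (hS (hadj i)).resolve_left hv
  have := Set.ncard_le_ncard hsub hSfin
  rw [Set.ncard_range_of_injective hf] at this
  omega

section hGraph

variable {R B : Type} {b : ℕ} {E : R → B → Prop}

theorem hGraph_adj_blue_dep (u : B) (i : Fin (b ^ 2 + 3)) :
    (hGraph R B b E).Adj (RVtx.blue u) (RVtx.dep u i) :=
  (SimpleGraph.fromRel_adj _ _ _).2 ⟨nofun, Or.inl rfl⟩

theorem hGraph_adj_star_depStar (i : Fin (b ^ 2 + 3)) :
    (hGraph R B b E).Adj RVtx.star (RVtx.depStar i) :=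
  (SimpleGraph.fromRel_adj _ _ _).2 ⟨nofun, Or.inl trivial⟩

end hGraph

theorem vertexCover_hGraph_contains_blue_and_star_general (R B : Type)
    (E : R → B → Prop)
    (b : ℕ)
    (k : ℕ) (hk : k < b)
    (S : Set (RVtx R B (b ^ 2 + 3))) (hSfin : S.Finite)
    (hS : IsVertexCover (hGraph R B b E) S) (hScard : S.ncard ≤ b + k + 2) :
    (∀ u : B, RVtx.blue u ∈ S) ∧ RVtx.star ∈ S := by
  have hlt : S.ncard < Nat.card (Fin (b ^ 2 + 3)) := by
    rw [Nat.card_fin]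
    nlinarith
  refine ⟨fun u => ?_, ?_⟩
  · exact hS.mem_of_ncard_lt hSfin (fun _ _ h => by injection h) (hGraph_adj_blue_dep u) hlt
  · exact hS.mem_of_ncard_lt hSfin (fun _ _ h => by injection h) hGraph_adj_star_depStar hlt

/-- In the graph `H` of the reduction (constructed from a connected bipartite
graph `G` with blue vertices `B` of size `b ≥ 2`, every blue vertex having a red
neighbor), any vertex cover of `H` of size at most `b + k + 2`, where `k < b`,
must contain all `b` blue vertices and the universal vertex `⋆`. -/
theorem vertexCover_hGraph_contains_blue_and_star (R B : Type) [Fintype R] [Fintype B]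
    (E : R → B → Prop)
    (b : ℕ) (hb : Fintype.card B = b) (hb2 : 2 ≤ b)
    (hredneighbor : ∀ u : B, ∃ r : R, E r u)
    (hconn : (SimpleGraph.fromRel (fun x y : R ⊕ B =>
        ∃ r u, x = Sum.inl r ∧ y = Sum.inr u ∧ E r u)).Connected)
    (k : ℕ) (hk : k < b)
    (S : Set (RVtx R B (b ^ 2 + 3))) (hSfin : S.Finite)
    (hS : IsVertexCover (hGraph R B b E) S) (hScard : S.ncard ≤ b + k + 2) :
    (∀ u : B, RVtx.blue u ∈ S) ∧ RVtx.star ∈ S :=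
  vertexCover_hGraph_contains_blue_and_star_general R B E b k hk S hSfin hS hScard
end

section
/- Let G be a cobipartite graph with clique bipartition A, B, |A| = p ≥ 1, |B| = q, with no global vertex in A, and suppose exactly one vertex b₁ ∈ B is non-global. Then every vertex cover of G of size p + q − 2 is of the form (A \ {a}) ∪ (B \ {b₁}) for some a ∈ A. -/
/-- A vertex is global if it is adjacent to every other vertex of `G`. -/
def IsGlobal {V : Type*} (G : SimpleGraph V) (v : V) : Prop :=
  ∀ w : V, w ≠ v → G.Adj v w

/-!
A vertex cover of size `p + q - 2` misses exactly two vertices, and these are non-adjacent.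
Since `A` and `B` are cliques, one of them is some `a ∈ A` and the other some `b ∈ B`; then
`b` is not adjacent to `a`, so `b` is non-global, i.e. `b = b₁`.
-/

open Set

section

variable {V : Type*} {G : SimpleGraph V}

theorem IsVertexCover.not_adj {S : Set V} (hS : IsVertexCover G S) {u v : V}
    (hu : u ∉ S) (hv : v ∉ S) : ¬ G.Adj u v :=
  fun h => (hS h).elim hu hv

theorem SimpleGraph.mem_and_mem_of_not_adj {A B : Set V} (hA : G.IsClique A)
    (hB : G.IsClique B) (hunion : A ∪ B = univ) {x y : V} (hxy : x ≠ y) (h : ¬ G.Adj x y) :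
    (x ∈ A ∧ y ∈ B) ∨ (y ∈ A ∧ x ∈ B) := by
  have hx : x ∈ A ∪ B := hunion ▸ mem_univ x
  have hy : y ∈ A ∪ B := hunion ▸ mem_univ y
  rcases hx with hxA | hxB <;> rcases hy with hyA | hyB
  · exact absurd (hA hxA hyA hxy) h
  · exact .inl ⟨hxA, hyB⟩
  · exact .inr ⟨hyA, hxB⟩
  · exact absurd (hB hxB hyB hxy) h

theorem IsVertexCover.exists_compl_eq_pair {A B S : Set V} (hS : IsVertexCover G S)
    (hA : G.IsClique A) (hB : G.IsClique B) (hunion : A ∪ B = univ) (hcard : Sᶜ.ncard = 2) :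
    ∃ a ∈ A, ∃ b ∈ B, ¬ G.Adj a b ∧ Sᶜ = {a, b} := by
  obtain ⟨x, y, hxy, hpair⟩ := ncard_eq_two.mp hcard
  have hx : x ∉ S := by simp [← mem_compl_iff, hpair]
  have hy : y ∉ S := by simp [← mem_compl_iff, hpair]
  rcases G.mem_and_mem_of_not_adj hA hB hunion hxy (hS.not_adj hx hy) with ⟨hxA, hyB⟩ | ⟨hyA, hxB⟩
  · exact ⟨x, hxA, y, hyB, hS.not_adj hx hy, hpair⟩
  · exact ⟨y, hyA, x, hxB, hS.not_adj hy hx, hpair.trans (pair_comm x y)⟩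

theorem eq_diff_union_diff_of_compl_eq_pair {A B S : Set V} (hdisj : Disjoint A B)
    (hunion : A ∪ B = univ) {a b : V} (ha : a ∈ A) (hb : b ∈ B) (hS : Sᶜ = {a, b}) :
    S = (A \ {a}) ∪ (B \ {b}) := by
  ext v
  have hv : v ∈ A ∪ B := hunion ▸ mem_univ v
  have hvS : v ∈ S ↔ v ≠ a ∧ v ≠ b := by
    rw [← notMem_compl_iff, hS]
    simp only [mem_insert_iff, mem_singleton_iff, not_or]
  have hAB := hdisj.ne_of_mem
  simp only [hvS, mem_union, mem_sdiff, mem_singleton_iff]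
  constructor
  · rintro ⟨hva, hvb⟩
    exact hv.imp (⟨·, hva⟩) (⟨·, hvb⟩)
  · rintro (⟨hvA, hva⟩ | ⟨hvB, hvb⟩)
    · exact ⟨hva, hAB hvA hb⟩
    · exact ⟨fun h => hAB ha hvB h.symm, hvb⟩

end

theorem vertexCover_form_of_unique_nonglobal_general {V : Type*} [Fintype V] (G : SimpleGraph V)
    (A B : Set V) (hdisj : Disjoint A B) (hunion : A ∪ B = Set.univ)
    (hA : G.IsClique A) (hB : G.IsClique B)
    (p q : ℕ) (hp : A.ncard = p) (hq : B.ncard = q) (hp1 : 1 ≤ p)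
    (b₁ : V) (hb₁ : b₁ ∈ B)
    (huniq : ∀ b ∈ B, ¬ IsGlobal G b → b = b₁)
    (S : Set V) (hS : IsVertexCover G S) (hcard : S.ncard = p + q - 2) :
    ∃ a ∈ A, S = (A \ {a}) ∪ (B \ {b₁}) := by
  have hV : Nat.card V = p + q := by
    rw [← ncard_univ, ← hunion, ncard_union_eq hdisj, hp, hq]
  have hq1 : 1 ≤ q := hq ▸ (ncard_pos B.toFinite).mpr ⟨b₁, hb₁⟩
  have hcompl : Sᶜ.ncard = 2 := ncard_compl_of_ncard_eq_add S (by omega)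
  obtain ⟨a, ha, b, hb, hab, hSc⟩ := hS.exists_compl_eq_pair hA hB hunion hcompl
  obtain rfl : b = b₁ := huniq b hb fun hglobal => hab (hglobal a (hdisj.ne_of_mem ha hb)).symm
  exact ⟨a, ha, eq_diff_union_diff_of_compl_eq_pair hdisj hunion ha hb hSc⟩

/-- Let `G` be a cobipartite graph with clique bipartition `A, B`, `|A| = p ≥ 1`,
`|B| = q`, with no global vertex in `A`, and suppose exactly one vertex `b₁ ∈ B`
is non-global. Then every vertex cover of `G` of size `p + q − 2` is of the form
`(A \ {a}) ∪ (B \ {b₁})` for some `a ∈ A`. -/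
theorem vertexCover_form_of_unique_nonglobal {V : Type*} [Fintype V] (G : SimpleGraph V)
    (A B : Set V) (hdisj : Disjoint A B) (hunion : A ∪ B = Set.univ)
    (hA : G.IsClique A) (hB : G.IsClique B)
    (p q : ℕ) (hp : A.ncard = p) (hq : B.ncard = q) (hp1 : 1 ≤ p)
    (hnoglobalA : ∀ a ∈ A, ¬ IsGlobal G a)
    (b₁ : V) (hb₁ : b₁ ∈ B) (hb₁ng : ¬ IsGlobal G b₁)
    (huniq : ∀ b ∈ B, ¬ IsGlobal G b → b = b₁)
    (S : Set V) (hS : IsVertexCover G S) (hcard : S.ncard = p + q - 2) :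
    ∃ a ∈ A, S = (A \ {a}) ∪ (B \ {b₁}) :=
  vertexCover_form_of_unique_nonglobal_general G A B hdisj hunion hA hB p q hp hq hp1 b₁ hb₁ huniq S
    hS hcard
end
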